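/- arXiv:1202.3933 — 3 statements merged into one kernel-verified Lean document; each statement's English description precedes it below -/
import Mathlib

section
/- For every integer n ≥ 2, ∫₀^∞ x^{n−1}/(e^x − 1) dx − ∫₀^∞ (x + iπ)^{n−1}/(e^{x+iπ} − 1) dx = i ∫₀^π (iy)^{n−1}/(e^{iy} − 1) dy. -/
/-!
On the half-strip `0 ≤ re z`, `0 ≤ im z ≤ π` the integrand is `z ^ (n - 2) * (z / (exp z - 1))`,
and `z / (exp z - 1)` is holomorphic there: `exp z = 1` only at `z = 0` in this strip, where the
singularity is removable. Cauchy's theorem on the rectangle `[0, R] × [0, π]` gives the identity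
up to the integral over the right edge, which is `O(R ^ (n - 1) * exp (-R))` and so vanishes
as `R → ∞`.
-/

open scoped Real Interval
open MeasureTheory Complex Set Filter Topology intervalIntegral Asymptotics

theorem integral_Ioi_sub_integral_Ioi_add_eq_of_differentiableOn {E : Type*}
    [NormedAddCommGroup E] [NormedSpace ℂ E] {f : ℂ → E} {h : ℝ}
    (hf : DifferentiableOn ℂ f (Ici 0 ×ℂ [[0, h]]))
    (hf₀ : IntegrableOn (fun x : ℝ => f x) (Ioi 0))
    (hfh : IntegrableOn (fun x : ℝ => f (x + h * I)) (Ioi 0))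
    (hvert : Tendsto (fun R : ℝ => ∫ y in (0 : ℝ)..h, f (R + y * I)) atTop (𝓝 0)) :
    (∫ x in Ioi (0 : ℝ), f x) - (∫ x in Ioi (0 : ℝ), f (x + h * I)) =
      I • ∫ y in (0 : ℝ)..h, f (y * I) := by
  have hrect : ∀ᶠ R : ℝ in atTop,
      (∫ x in (0 : ℝ)..R, f x) - (∫ x in (0 : ℝ)..R, f (x + h * I)) =
        I • (∫ y in (0 : ℝ)..h, f (y * I)) - I • ∫ y in (0 : ℝ)..h, f (R + y * I) := by
    filter_upwards [eventually_ge_atTop 0] with R hR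
    have hrect := integral_boundary_rect_eq_zero_of_differentiableOn f 0 (R + h * I) <|
      hf.mono <| reProdIm_subset_iff'.2 <| .inl
        ⟨by simpa [uIcc_of_le hR] using Icc_subset_Ici_self, by simp⟩
    simp only [zero_re, zero_im, add_re, add_im, ofReal_re, ofReal_im, mul_re, mul_im, I_re, I_im,
      mul_zero, zero_mul, mul_one, sub_zero, zero_add, add_zero, ofReal_zero] at hrect
    rw [← sub_eq_zero, ← hrect]
    abel
  have hlim := ((intervalIntegral_tendsto_integral_Ioi 0 hf₀ tendsto_id).sub
    (intervalIntegral_tendsto_integral_Ioi 0 hfh tendsto_id)).congr' hrect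
  refine tendsto_nhds_unique hlim ?_
  simpa using tendsto_const_nhds.sub (hvert.const_smul I)

theorem Complex.eq_zero_of_exp_eq_one {z : ℂ} (h : exp z = 1) (hz : |z.im| < 2 * π) : z = 0 := by
  obtain ⟨k, rfl⟩ := exp_eq_one_iff.1 h
  have hk : |(k : ℝ)| < 1 := by
    refine lt_of_mul_lt_mul_left ?_ Real.two_pi_pos.le
    simpa [abs_mul, abs_of_pos Real.pi_pos, mul_comm (k : ℝ)] using hz
  have : k = 0 := Int.abs_lt_one_iff.1 (by exact_mod_cast hk)
  simp [this]

/-- `z / (exp z - 1)`, with its removable singularity at `0` filled by `1`. -/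
noncomputable def divExpSubOne (z : ℂ) : ℂ := (dslope (fun w => exp w - 1) 0 z)⁻¹

theorem divExpSubOne_of_ne_zero {z : ℂ} (hz : z ≠ 0) : divExpSubOne z = z / (exp z - 1) := by
  simp [divExpSubOne, dslope_of_ne _ hz, slope_def_field]

theorem pow_mul_divExpSubOne_of_ne_zero (m : ℕ) {z : ℂ} (hz : z ≠ 0) :
    z ^ m * divExpSubOne z = z ^ (m + 1) / (exp z - 1) := by
  rw [divExpSubOne_of_ne_zero hz, mul_div_assoc', pow_succ]

theorem differentiableAt_divExpSubOne {z : ℂ} (hz : |z.im| < 2 * π) :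
    DifferentiableAt ℂ divExpSubOne z := by
  have hd : Differentiable ℂ (dslope (fun w => exp w - 1) 0) := fun w =>
    ((differentiableOn_dslope univ_mem).2 (by fun_prop : Differentiable ℂ _).differentiableOn)
      |>.differentiableAt univ_mem
  refine (hd z).inv ?_
  rcases eq_or_ne z 0 with rfl | hz₀
  · simp [dslope_same]
  · rw [dslope_of_ne _ hz₀, slope_def_field]
    simpa [sub_eq_zero, hz₀] using fun h => hz₀ (eq_zero_of_exp_eq_one h hz)

theorem norm_divExpSubOne_le {z : ℂ} (hz : Real.log 2 ≤ z.re) :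
    ‖divExpSubOne z‖ ≤ 2 * ‖z‖ * Real.exp (-z.re) := by
  have hexp : 2 ≤ Real.exp z.re := (Real.exp_log two_pos).ge.trans (Real.exp_le_exp.2 hz)
  have hz₀ : z ≠ 0 := by
    rintro rfl
    norm_num at hexp
  have hden : Real.exp z.re / 2 ≤ ‖exp z - 1‖ := by
    have := norm_sub_norm_le (exp z) 1
    rw [norm_exp, norm_one] at this
    linarith
  rw [divExpSubOne_of_ne_zero hz₀, norm_div, Real.exp_neg]
  calc ‖z‖ / ‖exp z - 1‖ ≤ ‖z‖ / (Real.exp z.re / 2) := by gcongr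
    _ = 2 * ‖z‖ * (Real.exp z.re)⁻¹ := by field_simp

theorem differentiableAt_pow_mul_divExpSubOne (m : ℕ) {z : ℂ} (hz : |z.im| < 2 * π) :
    DifferentiableAt ℂ (fun w => w ^ m * divExpSubOne w) z :=
  (differentiableAt_pow m).mul (differentiableAt_divExpSubOne hz)

theorem norm_pow_mul_divExpSubOne_le (m : ℕ) {z : ℂ} (hre : π ≤ z.re) (him : |z.im| ≤ π) :
    ‖z ^ m * divExpSubOne z‖ ≤ 2 ^ (m + 2) * (z.re ^ (m + 1) * Real.exp (-z.re)) := by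
  have hz : ‖z‖ ≤ 2 * z.re := (norm_le_abs_re_add_abs_im z).trans <| by
    rw [abs_of_pos (Real.pi_pos.trans_le hre)]
    linarith
  have hlog : Real.log 2 ≤ z.re := by
    linarith [Real.log_two_lt_d9, Real.pi_gt_three]
  calc ‖z ^ m * divExpSubOne z‖ = ‖z‖ ^ m * ‖divExpSubOne z‖ := by rw [norm_mul, norm_pow]
    _ ≤ ‖z‖ ^ m * (2 * ‖z‖ * Real.exp (-z.re)) := by gcongr; exact norm_divExpSubOne_le hlog
    _ = 2 * ‖z‖ ^ (m + 1) * Real.exp (-z.re) := by ring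
    _ ≤ 2 * (2 * z.re) ^ (m + 1) * Real.exp (-z.re) := by gcongr
    _ = 2 ^ (m + 2) * (z.re ^ (m + 1) * Real.exp (-z.re)) := by ring

theorem integrableOn_pow_mul_divExpSubOne (m : ℕ) {c : ℝ} (hc : |c| ≤ π) :
    IntegrableOn (fun x : ℝ => (x + c * I) ^ m * divExpSubOne (x + c * I)) (Ioi 0) := by
  have hc' : |c| < 2 * π := hc.trans_lt (by linarith [Real.pi_pos])
  have hcont : Continuous fun x : ℝ => (x + c * I) ^ m * divExpSubOne (x + c * I) :=
    continuous_iff_continuousAt.2 fun x =>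
      (differentiableAt_pow_mul_divExpSubOne m (by simpa using hc')).continuousAt.comp
        (by fun_prop)
  have hdecay : IntegrableAtFilter (fun x : ℝ => x ^ (m + 1) * Real.exp (-x)) atTop :=
    ⟨Ioi 0, Ioi_mem_atTop 0, by
      simpa only [Real.rpow_natCast, Real.rpow_one] using
        integrableOn_rpow_mul_exp_neg_rpow (s := ((m + 1 : ℕ) : ℝ))
          (neg_one_lt_zero.trans_le (Nat.cast_nonneg _)) one_pos⟩
  refine ((hcont.locallyIntegrable.locallyIntegrableOn (Ici 0)).integrableOn_of_isBigO_atTop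
    (isBigO_iff.2 ⟨2 ^ (m + 2), ?_⟩) hdecay).mono_set Ioi_subset_Ici_self
  filter_upwards [eventually_ge_atTop π] with x hx
  have hx₀ : 0 ≤ x := Real.pi_pos.le.trans hx
  rw [Real.norm_of_nonneg (by positivity)]
  simpa using norm_pow_mul_divExpSubOne_le m (z := x + c * I) (by simpa) (by simpa)

theorem tendsto_integral_pow_mul_divExpSubOne_atTop (m : ℕ) :
    Tendsto (fun R : ℝ => ∫ y in (0 : ℝ)..π, (R + y * I) ^ m * divExpSubOne (R + y * I)) atTop
      (𝓝 0) := by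
  refine squeeze_zero_norm' (a := fun R => 2 ^ (m + 2) * (R ^ (m + 1) * Real.exp (-R)) * |π - 0|)
    ?_ ?_
  · filter_upwards [eventually_ge_atTop π] with R hR
    refine norm_integral_le_of_norm_le_const fun y hy => ?_
    rw [uIoc_of_le Real.pi_pos.le] at hy
    simpa using norm_pow_mul_divExpSubOne_le m (z := R + y * I) (by simpa)
      (by simpa [abs_of_pos hy.1] using hy.2)
  · simpa using
      ((Real.tendsto_pow_mul_exp_neg_atTop_nhds_zero (m + 1)).const_mul (2 ^ (m + 2))).mul_const
        |π - 0|

/-- For every integer `n ≥ 2`,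
`∫₀^∞ x^(n-1)/(e^x-1) dx − ∫₀^∞ (x+iπ)^(n-1)/(e^(x+iπ)-1) dx
  = i ∫₀^π (iy)^(n-1)/(e^(iy)-1) dy`. -/
theorem limit_contour_identity (n : ℕ) (hn : 2 ≤ n) :
    (∫ x in Set.Ioi (0 : ℝ), (x : ℂ) ^ (n - 1) / (Complex.exp x - 1)) -
      (∫ x in Set.Ioi (0 : ℝ),
        ((x : ℂ) + Complex.I * π) ^ (n - 1) / (Complex.exp ((x : ℂ) + Complex.I * π) - 1)) =
      Complex.I * ∫ y in (0 : ℝ)..π,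
        (Complex.I * y) ^ (n - 1) / (Complex.exp (Complex.I * y) - 1) := by
  obtain ⟨m, rfl⟩ := Nat.exists_eq_add_of_le' hn
  have hF (z : ℂ) (hz : z ≠ 0) : z ^ m * divExpSubOne z = z ^ (m + 2 - 1) / (exp z - 1) :=
    pow_mul_divExpSubOne_of_ne_zero m hz
  have hstrip (z : ℂ) (hz : z ∈ Ici 0 ×ℂ [[0, π]]) : |z.im| < 2 * π := by
    rw [mem_reProdIm, uIcc_of_le Real.pi_pos.le] at hz
    rw [abs_of_nonneg hz.2.1]
    linarith [hz.2.2, Real.pi_pos]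
  have hcontour := integral_Ioi_sub_integral_Ioi_add_eq_of_differentiableOn
    (f := fun z => z ^ m * divExpSubOne z) (h := π)
    (fun z hz => (differentiableAt_pow_mul_divExpSubOne m (hstrip z hz)).differentiableWithinAt)
    (by simpa using integrableOn_pow_mul_divExpSubOne m (c := 0) (by simp [Real.pi_pos.le]))
    (integrableOn_pow_mul_divExpSubOne m (abs_of_pos Real.pi_pos).le)
    (tendsto_integral_pow_mul_divExpSubOne_atTop m)
  calc _ = (∫ x in Ioi (0 : ℝ), (x : ℂ) ^ m * divExpSubOne x) -
        ∫ x in Ioi (0 : ℝ), (x + π * I) ^ m * divExpSubOne (x + π * I) := by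
        congr 1 <;> refine setIntegral_congr_fun measurableSet_Ioi fun x hx => ?_
        · exact (hF _ (ofReal_ne_zero.2 (ne_of_gt hx))).symm
        · rw [mul_comm I, hF]
          exact fun h => by simpa [Real.pi_ne_zero] using congrArg im h
    _ = I • ∫ y in (0 : ℝ)..π, (y * I) ^ m * divExpSubOne (y * I) := hcontour
    _ = _ := by
        rw [smul_eq_mul]
        congr 1
        refine integral_congr_ae (.of_forall fun y hy => ?_)
        rw [uIoc_of_le Real.pi_pos.le] at hy
        rw [mul_comm I, hF _ (by simpa using hy.1.ne')]
end

section
/- The case n = 2 of the contour identity reads: ζ(2) + (1/2)·ζ(2) + iπ ∫₀^∞ 1/(e^x + 1) dx = ∫₀^π (y/2) dy + (i/2) ∫₀^π (y·sin y)/(1 − cos y) dy, as an identity of complex numbers. -/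
open scoped Real
open MeasureTheory

/-! The real parts agree because `ζ(2) = π² / 6`. For the imaginary parts,
`∫₀^∞ dx / (eˣ + 1) = log 2` via the antiderivative `-log (1 + e⁻ˣ)`, while
`sin y / (1 - cos y) = cot (y / 2)`, so after substituting `y = 2x` an integration by parts
against `x log (sin x)` turns `∫₀^π y sin y / (1 - cos y) dy` into
`-4 ∫₀^{π/2} log (sin x) dx = 2π log 2`. -/

open Real Set Filter Topology

namespace Real

lemma sinc_pos {x : ℝ} (hx : x ∈ Ioo (-π) π) : 0 < sinc x := by
  rcases lt_trichotomy x 0 with hneg | rfl | hpos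
  · rw [sinc_of_ne_zero hneg.ne]
    exact div_pos_of_neg_of_neg (sin_neg_of_neg_of_neg_pi_lt hneg hx.1) hneg
  · simp
  · rw [sinc_of_ne_zero hpos.ne']
    exact div_pos (sin_pos_of_pos_of_lt_pi hpos hx.2) hpos

lemma mul_log_sin_eq {x : ℝ} (hx : sinc x ≠ 0) :
    x * log (sin x) = x * log x + x * log (sinc x) := by
  rcases eq_or_ne x 0 with rfl | hx0
  · simp
  rw [← mul_add, ← log_mul hx0 hx, sinc_of_ne_zero hx0, mul_div_cancel₀ _ hx0]

-- `x log (sin x) = x log x + x log (sinc x)` removes the singularity of `log ∘ sin` at `0`.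
lemma continuousOn_mul_log_sin : ContinuousOn (fun x => x * log (sin x)) (Ioo (-π) π) := by
  refine ContinuousOn.congr ?_ fun x hx => mul_log_sin_eq (sinc_pos hx).ne'
  exact continuous_mul_log.continuousOn.add
    (continuousOn_id.mul (continuous_sinc.continuousOn.log fun x hx => (sinc_pos hx).ne'))

lemma hasDerivAt_mul_log_sin {x : ℝ} (hx : sin x ≠ 0) :
    HasDerivAt (fun x => x * log (sin x)) (log (sin x) + x * cot x) x := by
  refine ((hasDerivAt_id x).mul ((hasDerivAt_sin x).log hx)).congr_deriv ?_
  rw [cot_eq_cos_div_sin, id, one_mul]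

lemma mul_cot_eq_cos_div_sinc {x : ℝ} (hx : x ≠ 0) : x * cot x = cos x / sinc x := by
  rw [cot_eq_cos_div_sin, sinc_of_ne_zero hx, div_div_eq_mul_div, mul_div_assoc, mul_div_assoc']
  ring

lemma intervalIntegrable_mul_cot {a b : ℝ} (hab : uIcc a b ⊆ Ioo (-π) π) :
    IntervalIntegrable (fun x => x * cot x) volume a b := by
  have hcont : ContinuousOn (fun x => cos x / sinc x) (uIcc a b) :=
    continuous_cos.continuousOn.div continuous_sinc.continuousOn
      fun x hx => (sinc_pos (hab hx)).ne'
  refine hcont.intervalIntegrable.congr_ae ?_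
  filter_upwards [ae_restrict_of_ae (volume.ae_ne (0 : ℝ))] with x hx
  exact (mul_cot_eq_cos_div_sinc hx).symm

lemma integral_mul_cot_zero_pi_div_two : ∫ x in 0..π / 2, x * cot x = π / 2 * log 2 := by
  have hle : (0 : ℝ) ≤ π / 2 := by positivity
  have hsub : uIcc 0 (π / 2) ⊆ Ioo (-π) π := by
    rw [uIcc_of_le hle]
    exact Icc_subset_Ioo (by linarith [pi_pos]) (by linarith [pi_pos])
  have hint := intervalIntegrable_mul_cot hsub
  have hlog : IntervalIntegrable (fun x => log (sin x)) volume 0 (π / 2) :=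
    intervalIntegrable_log_sin
  have hFTC := intervalIntegral.integral_eq_sub_of_hasDerivAt_of_le hle
    (continuousOn_mul_log_sin.mono (uIcc_of_le hle ▸ hsub))
    (fun x hx => hasDerivAt_mul_log_sin (sin_pos_of_pos_of_lt_pi hx.1 (by linarith [hx.2])).ne')
    (hlog.add hint)
  rw [intervalIntegral.integral_add hlog hint,
    integral_log_sin_zero_pi_div_two] at hFTC
  simp only [neg_mul, sin_pi_div_two, log_one, mul_zero, sin_zero, log_zero, sub_self] at hFTC
  linarith

-- Holds everywhere: where `sin (x / 2) = 0` both sides are divisions by zero.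
lemma sin_div_one_sub_cos (x : ℝ) : sin x / (1 - cos x) = cot (x / 2) := by
  have hsin : sin x = 2 * sin (x / 2) * cos (x / 2) := by
    rw [← sin_two_mul, mul_div_cancel₀ _ two_ne_zero]
  have hcos : 1 - cos x = 2 * sin (x / 2) ^ 2 := by
    rw [sin_sq_eq_half_sub, mul_div_cancel₀ _ two_ne_zero]
    ring
  rw [hsin, hcos, cot_eq_cos_div_sin]
  rcases eq_or_ne (sin (x / 2)) 0 with h | h
  · simp [h]
  · field_simp

lemma integral_mul_sin_div_one_sub_cos :
    ∫ y in 0..π, y * sin y / (1 - cos y) = 2 * π * log 2 := by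
  calc ∫ y in 0..π, y * sin y / (1 - cos y)
      = 2 * ∫ y in 0..π, y / 2 * cot (y / 2) := by
        rw [← intervalIntegral.integral_const_mul]
        congr 1 with y
        rw [mul_div_assoc, sin_div_one_sub_cos]
        ring
    _ = 2 * (2 * ∫ x in 0..π / 2, x * cot x) := by
        rw [intervalIntegral.integral_comp_div (fun x => x * cot x) two_ne_zero, zero_div,
          smul_eq_mul]
    _ = 2 * π * log 2 := by
        rw [integral_mul_cot_zero_pi_div_two]
        ring

lemma integral_Ioi_one_div_exp_add_one : ∫ x in Ioi 0, 1 / (exp x + 1) = log 2 := by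
  have hderiv (x : ℝ) : HasDerivAt (fun x => -log (1 + exp (-x))) (1 / (exp x + 1)) x := by
    refine ((((hasDerivAt_neg x).exp.const_add 1).log (by positivity)).neg).congr_deriv ?_
    rw [exp_neg]
    field_simp
  have hlim : Tendsto (fun x => -log (1 + exp (-x))) atTop (𝓝 0) := by
    have := ((continuousAt_log (by norm_num : (1 : ℝ) + 0 ≠ 0)).tendsto.comp
      (tendsto_exp_neg_atTop_nhds_zero.const_add 1)).neg
    simpa using this
  rw [integral_Ioi_of_hasDerivAt_of_nonneg' (fun x _ => hderiv x) (fun x _ => by positivity) hlim]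
  norm_num

end Real

/-- The case `n = 2` of the contour identity:
`ζ(2) + ζ(2)/2 + iπ∫₀^∞ dx/(e^x+1) = ∫₀^π (y/2) dy + (i/2)∫₀^π y sin y/(1 - cos y) dy`. -/
theorem contour_identity_n_two :
    riemannZeta 2 + (1 / 2 : ℂ) * riemannZeta 2 +
      Complex.I * (π : ℂ) * ((∫ x in Set.Ioi (0 : ℝ), 1 / (Real.exp x + 1) : ℝ) : ℂ) =
      ((∫ y in (0 : ℝ)..π, y / 2 : ℝ) : ℂ) +
        (Complex.I / 2) * ((∫ y in (0 : ℝ)..π, y * Real.sin y / (1 - Real.cos y) : ℝ) : ℂ) := by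
  have hlinear : ∫ y in (0 : ℝ)..π, y / 2 = π ^ 2 / 4 := by
    rw [intervalIntegral.integral_div, integral_id]
    ring
  rw [riemannZeta_two, Real.integral_Ioi_one_div_exp_add_one, hlinear,
    Real.integral_mul_sin_div_one_sub_cos]
  push_cast
  ring
end

section
/- For every positive integer n, the values of the Riemann zeta function at even integers satisfy the recursion Γ(2n)·ζ(2n) + Σ_{k=0}^{n−1} α(n,k)·ζ(2n−2k) = (−1)^{n−1} · π^{2n}/(4n), where α(n,k) = (1 − 2^{1−2n+2k}) · (−π²)^k · C(2n−1, 2k) · Γ(2n−2k) and C(m, j) denotes the binomial coefficient. -/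
/-!
Euler's formula `Γ(2m) ζ(2m) = (-1)^(m+1) (2π)^(2m) B_{2m} / (4m)` writes the `k`-th summand as
`(-1)^(n-1) π^(2n) / (4n)` times `C(2n, 2k) (2^(2n-2k) - 2) B_{2n-2k}`: the factor `1 - 2^(1-2m)`
turns `2^(2m)` into `2^(2m) - 2`, and `C(2n-1, 2k) · 2n = C(2n, 2k) · (2n - 2k)` turns the
denominator `4(n - k)` into `4n`. The theorem thus reduces to the Bernoulli identity
`2^(2n) B_{2n} + Σ_{k<n} C(2n, 2k) (2^(2n-2k) - 2) B_{2n-2k} = 1`. With `B(x) = x / (e^x - 1)`,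
it follows by comparing the coefficients of `x^(2n)` in `B(2x) (e^x + 1) = 2 B(x)` and in
`B(x) e^x = B(x) + x`, after discarding the odd-index terms, which vanish.
-/

open scoped Real
open Nat Finset PowerSeries

theorem rescale_two_bernoulliPowerSeries_mul_exp_add_one :
    rescale (2 : ℚ) (bernoulliPowerSeries ℚ) * (exp ℚ + 1) = 2 * bernoulliPowerSeries ℚ := by
  have hexp : exp ℚ - 1 ≠ 0 := fun h => by
    simpa [coeff_exp] using congrArg (coeff (R := ℚ) 1) h
  have hexp_sq : exp ℚ * exp ℚ = rescale (2 : ℚ) (exp ℚ) := by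
    simpa [rescale_one, one_add_one_eq_two] using exp_mul_exp_eq_exp_add (1 : ℚ) 1
  apply mul_right_cancel₀ hexp
  calc rescale (2 : ℚ) (bernoulliPowerSeries ℚ) * (exp ℚ + 1) * (exp ℚ - 1)
      = rescale (2 : ℚ) (bernoulliPowerSeries ℚ * (exp ℚ - 1)) := by
        rw [map_mul, map_sub, map_one, ← hexp_sq]; ring
    _ = 2 * bernoulliPowerSeries ℚ * (exp ℚ - 1) := by
        rw [bernoulliPowerSeries_mul_exp_sub_one, rescale_X, map_ofNat, mul_assoc,
          bernoulliPowerSeries_mul_exp_sub_one]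

theorem sum_range_choose_mul_two_pow_mul_bernoulli (m : ℕ) :
    ∑ k ∈ range (m + 1), (m.choose k : ℚ) * 2 ^ k * bernoulli k = (2 - 2 ^ m) * bernoulli m := by
  have h := congrArg (coeff (R := ℚ) m) rescale_two_bernoulliPowerSeries_mul_exp_add_one
  rw [← map_ofNat (C (R := ℚ)) 2, coeff_C_mul] at h
  simp only [mul_add, map_add, mul_one, coeff_mul, coeff_rescale, bernoulliPowerSeries, coeff_mk,
    coeff_exp, Algebra.algebraMap_self, RingHom.id_apply, one_div,
    Finset.Nat.sum_antidiagonal_eq_sum_range_succ_mk] at h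
  calc ∑ k ∈ range (m + 1), (m.choose k : ℚ) * 2 ^ k * bernoulli k
      = m ! * ∑ k ∈ range (m + 1), 2 ^ k * (bernoulli k / k !) * ((m - k)! : ℚ)⁻¹ := by
        rw [mul_sum]
        refine sum_congr rfl fun k hk => ?_
        rw [Nat.cast_choose ℚ (Nat.le_of_lt_succ (mem_range.mp hk))]
        field_simp
    _ = (2 - 2 ^ m) * bernoulli m := by
        rw [eq_sub_of_add_eq h]
        field_simp

theorem Finset.sum_range_two_mul_add_one_eq_sum_even {M : Type*} [AddCommMonoid M] (f : ℕ → M)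
    (hf : ∀ i, Odd i → f i = 0) (n : ℕ) :
    ∑ i ∈ range (2 * n + 1), f i = ∑ j ∈ range (n + 1), f (2 * j) := by
  induction n with
  | zero => simp
  | succ n ih =>
    rw [show 2 * (n + 1) + 1 = 2 * n + 1 + 1 + 1 by ring, sum_range_succ _ (2 * n + 1 + 1),
      sum_range_succ _ (2 * n + 1), ih, hf _ (odd_two_mul_add_one n), add_zero,
      sum_range_succ _ (n + 1), show 2 * (n + 1) = 2 * n + 1 + 1 by ring]

theorem bernoulli_two_mul_recursion (n : ℕ) :
    2 ^ (2 * n) * bernoulli (2 * n) +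
      ∑ k ∈ range n, ((2 * n).choose (2 * k) : ℚ) * (2 ^ (2 * n - 2 * k) - 2) *
        bernoulli (2 * n - 2 * k) = 1 := by
  set b : ℕ → ℚ := fun i => (2 * n).choose i * (2 ^ (2 * n - i) - 2) * bernoulli (2 * n - i)
  have hb_odd : ∀ i, Odd i → b i = 0 := by
    intro i hi
    rcases lt_or_ge (2 * n) i with hlt | hle
    · simp [b, Nat.choose_eq_zero_of_lt hlt]
    have hodd : Odd (2 * n - i) := by
      obtain ⟨j, rfl⟩ := hi; exact ⟨n - j - 1, by omega⟩
    rcases eq_or_ne (2 * n - i) 1 with h1 | h1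
    · norm_num [b, h1]
    · simp [b, bernoulli_eq_zero_of_odd hodd (by obtain ⟨j, hj⟩ := hodd; omega)]
  have hb_sum : ∑ i ∈ range (2 * n + 1), b i = -2 ^ (2 * n) * bernoulli (2 * n) := by
    have hB : ∑ i ∈ range (2 * n + 1), ((2 * n).choose i : ℚ) * bernoulli i = bernoulli (2 * n) := by
      rw [sum_range_succ, sum_bernoulli, if_neg (by omega)]; simp
    calc ∑ i ∈ range (2 * n + 1), b i
        = ∑ i ∈ range (2 * n + 1), ((2 * n).choose i : ℚ) * (2 ^ i - 2) * bernoulli i := by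
          rw [← sum_range_reflect]
          refine sum_congr rfl fun i hi => ?_
          have hi : i ≤ 2 * n := by simpa [Nat.lt_succ_iff] using hi
          simp only [b, Nat.sub_sub_self hi, add_tsub_cancel_right, Nat.choose_symm hi]
      _ = ∑ i ∈ range (2 * n + 1), ((2 * n).choose i : ℚ) * 2 ^ i * bernoulli i -
            2 * ∑ i ∈ range (2 * n + 1), ((2 * n).choose i : ℚ) * bernoulli i := by
          rw [mul_sum, ← sum_sub_distrib]; exact sum_congr rfl fun i _ => by ring
      _ = -2 ^ (2 * n) * bernoulli (2 * n) := by
          rw [sum_range_choose_mul_two_pow_mul_bernoulli, hB]; ring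
  rw [sum_range_two_mul_add_one_eq_sum_even b hb_odd, sum_range_succ] at hb_sum
  have hb_top : b (2 * n) = -1 := by norm_num [b]
  linarith

theorem Complex.Gamma_mul_riemannZeta_two_mul_nat (m : ℕ) :
    Complex.Gamma (2 * m) * riemannZeta (2 * m) =
      (-1) ^ (m + 1) * (2 * π : ℂ) ^ (2 * m) * bernoulli (2 * m) / (4 * m) := by
  obtain rfl | hm := eq_or_ne m 0
  · simp
  have h2m : (2 * m : ℂ) ≠ 0 := by exact_mod_cast (by omega : 2 * m ≠ 0)
  have hΓ : Complex.Gamma (2 * m) = (2 * m)! / (2 * m) := by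
    rw [eq_div_iff h2m, mul_comm, ← Complex.Gamma_add_one _ h2m, ← Complex.Gamma_nat_eq_factorial]
    push_cast; rfl
  have hpow : (2 : ℂ) ^ (2 * m : ℤ) = 2 ^ (2 * m) := by exact_mod_cast zpow_natCast (2 : ℂ) (2 * m)
  rw [riemannZeta_two_mul_nat', zpow_sub₀ two_ne_zero, hΓ, zpow_one, hpow]
  have hfact : ((2 * m)! : ℂ) ≠ 0 := mod_cast (2 * m).factorial_ne_zero
  field_simp
  ring

theorem zeta_even_recursion_term_eq {n k : ℕ} (hk : k < n) :
    ((1 - (2 : ℂ) ^ ((1 : ℤ) - 2 * n + 2 * k)) * (-(π : ℂ) ^ 2) ^ k *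
        (Nat.choose (2 * n - 1) (2 * k) : ℂ) * Complex.Gamma (2 * n - 2 * k)) *
      riemannZeta (2 * n - 2 * k) =
    (-1) ^ (n - 1) * (π : ℂ) ^ (2 * n) / (4 * n) *
      (((2 * n).choose (2 * k) * (2 ^ (2 * n - 2 * k) - 2) * bernoulli (2 * n - 2 * k) : ℚ) : ℂ) := by
  obtain ⟨m, rfl⟩ := Nat.exists_eq_add_of_lt hk
  have hsub : 2 * (k + m + 1) - 2 * k = 2 * (m + 1) := by omega
  have hchoose : ((2 * (k + m + 1) - 1).choose (2 * k) : ℂ) * (2 * (k + m + 1)) =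
      (2 * (k + m + 1)).choose (2 * k) * (2 * (m + 1)) := by
    have h := Nat.choose_mul_succ_eq (2 * (k + m + 1) - 1) (2 * k)
    rw [Nat.sub_add_cancel (by omega), hsub] at h
    exact_mod_cast h
  have harg : (2 * ↑(k + m + 1) - 2 * k : ℂ) = 2 * ↑(m + 1) := by push_cast; ring
  have hexp : (1 : ℤ) - 2 * ↑(k + m + 1) + 2 * k = 1 - 2 * ↑(m + 1) := by push_cast; ring
  have hpow : (2 : ℂ) ^ (2 * ↑(m + 1) : ℤ) = 2 ^ (2 * (m + 1)) := by
    exact_mod_cast zpow_natCast (2 : ℂ) (2 * (m + 1))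
  rw [mul_assoc, harg, hexp, Complex.Gamma_mul_riemannZeta_two_mul_nat, hsub,
    zpow_sub₀ two_ne_zero, zpow_one, hpow, show k + m + 1 - 1 = k + m by omega]
  have hn : (k + m + 1 : ℂ) ≠ 0 := by exact_mod_cast (by omega : k + m + 1 ≠ 0)
  push_cast at hchoose ⊢
  field_simp
  rw [neg_pow, ← pow_mul]
  linear_combination (2 ^ (2 * (m + 1)) - 2) * (-1 : ℂ) ^ (k + m) * (π : ℂ) ^ (2 * (k + m + 1)) *
    2 ^ (2 * (m + 1)) * (bernoulli (2 * (m + 1)) : ℂ) / 2 * hchoose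

theorem zeta_even_recursion_general (n : ℕ) :
    Complex.Gamma (2 * n) * riemannZeta (2 * n) +
      ∑ k ∈ Finset.range n,
        ((1 - (2 : ℂ) ^ ((1 : ℤ) - 2 * n + 2 * k)) * (-(π : ℂ) ^ 2) ^ k *
            (Nat.choose (2 * n - 1) (2 * k) : ℂ) * Complex.Gamma (2 * n - 2 * k)) *
          riemannZeta (2 * n - 2 * k) =
      (-1) ^ (n - 1) * (π : ℂ) ^ (2 * n) / (4 * n) := by
  obtain rfl | hn := eq_or_ne n 0
  · simp -- both sides are junk zeros: `Γ 0 = 0` and `x / 0 = 0`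
  have hfirst : Complex.Gamma (2 * n) * riemannZeta (2 * n) =
      (-1) ^ (n - 1) * (π : ℂ) ^ (2 * n) / (4 * n) * ((2 ^ (2 * n) * bernoulli (2 * n) : ℚ) : ℂ) := by
    rw [Complex.Gamma_mul_riemannZeta_two_mul_nat, show n + 1 = n - 1 + 2 by omega]
    push_cast
    ring
  rw [sum_congr rfl fun k hk => zeta_even_recursion_term_eq (mem_range.mp hk), hfirst, ← mul_sum,
    ← mul_add, ← Rat.cast_sum, ← Rat.cast_add, bernoulli_two_mul_recursion, Rat.cast_one, mul_one]

/-- The recursion for `ζ(2n)`: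
`Γ(2n) ζ(2n) + Σ_{k=0}^{n-1} α(n,k) ζ(2n-2k) = (−1)^(n−1) π^(2n)/(4n)`, where
`α(n,k) = (1 − 2^(1−2n+2k)) (−π²)^k C(2n−1, 2k) Γ(2n−2k)`. -/
theorem zeta_even_recursion (n : ℕ) (hn : 0 < n) :
    Complex.Gamma (2 * n) * riemannZeta (2 * n) +
      ∑ k ∈ Finset.range n,
        ((1 - (2 : ℂ) ^ ((1 : ℤ) - 2 * n + 2 * k)) * (-(π : ℂ) ^ 2) ^ k *
            (Nat.choose (2 * n - 1) (2 * k) : ℂ) * Complex.Gamma (2 * n - 2 * k)) *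
          riemannZeta (2 * n - 2 * k) =
      (-1) ^ (n - 1) * (π : ℂ) ^ (2 * n) / (4 * n) :=
  zeta_even_recursion_general n
end
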